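/- The operators M = Σ_{i=1}^N θ̂_i (left multiplication by θ_i summed over i) and D = Σ_{i=1}^N t^{i-1} ∂_i commute with T_j for all 1 ≤ j < N. -/

import Mathlib

open Finset

noncomputable section

/-- The space of "fermionic" polynomials: formal linear combinations of
monomials `φ_E = θ_{i₁}⋯θ_{i_m}` indexed by finite sets `E` of indices. -/
abbrev SP (K : Type) [Field K] := Finset ℕ →₀ K

variable {K : Type} [Field K]

/-- basis monomial φ_E -/
def phi (K : Type) [Field K] (E : Finset ℕ) : SP K := Finsupp.single E 1

/-- linear operator determined by its values on the basis {φ_E} -/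
def opOf (v : Finset ℕ → SP K) : SP K →ₗ[K] SP K :=
  Finsupp.lsum K fun E => LinearMap.toSpanSingleton K (SP K) (v E)

/-- the image s_i E of E under the transposition swapping i, i+1 -/
def swapSet (i : ℕ) (E : Finset ℕ) : Finset ℕ := E.image (Equiv.swap i (i + 1))

/-- the Hecke algebra operator T_i acting on anti-commuting variables -/
def heckeT (t : K) (i : ℕ) : SP K →ₗ[K] SP K :=
  opOf fun E =>
    if i ∈ E then
      (if i + 1 ∈ E then -phi K E else phi K (swapSet i E))
    else
      (if i + 1 ∈ E then (t - 1) • phi K E + t • phi K (swapSet i E)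
       else t • phi K E)

/-- signed exterior multiplication θ̂_i -/
def thetaHat (K : Type) [Field K] (i : ℕ) : SP K →ₗ[K] SP K :=
  opOf fun E =>
    if i ∈ E then 0
    else ((-1 : K) ^ (E.filter (· < i)).card) • phi K (insert i E)

/-- formal fermionic derivative ∂_i -/
def fermD (K : Type) [Field K] (i : ℕ) : SP K →ₗ[K] SP K :=
  opOf fun E =>
    if i ∈ E then ((-1 : K) ^ (E.filter (· < i)).card) • phi K (E.erase i)
    else 0

/-- M = Σ_{i=1}^N θ̂_i -/
def opM (K : Type) [Field K] (N : ℕ) : SP K →ₗ[K] SP K :=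
  ∑ i ∈ Finset.Icc 1 N, thetaHat K i

/-- D = Σ_{i=1}^N t^{i-1} ∂_i -/
def opD (t : K) (N : ℕ) : SP K →ₗ[K] SP K :=
  ∑ i ∈ Finset.Icc 1 N, t ^ (i - 1) • fermD K i

/-!
Each summand θ̂_i, ∂_i with i ∉ {j, j+1} commutes with T_j by itself: T_j only reads the
indices j, j+1, and swapping them changes neither the rest of E nor the sign
(-1)^#{k ∈ E | k < i}. The two remaining summands commute with T_j only as the pairs
θ̂_j + θ̂_{j+1} and ∂_j + t ∂_{j+1} (the weights t^{j-1}, t^j in D have ratio t). For the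
pairs it suffices to check φ_F, φ_{F ∪ {j}}, φ_{F ∪ {j+1}}, φ_{F ∪ {j,j+1}} with F avoiding
j and j+1, where every sign is ±(-1)^#{k ∈ F | k < j}.
-/

theorem Finset.forall_of_forall_insert_pair {α : Type*} [DecidableEq α] (a b : α)
    {P : Finset α → Prop}
    (h : ∀ F, a ∉ F → b ∉ F →
      P F ∧ P (insert a F) ∧ P (insert b F) ∧ P (insert a (insert b F)))
    (E : Finset α) : P E := by
  obtain ⟨h₀, ha, hb, hab⟩ := h (E \ {a, b}) (by simp) (by simp)
  by_cases haE : a ∈ E <;> by_cases hbE : b ∈ E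
  · convert hab using 1; ext x; grind
  · convert ha using 1; ext x; grind
  · convert hb using 1; ext x; grind
  · convert h₀ using 1; ext x; grind

theorem Finset.filter_le_eq_filter_lt_of_notMem {α : Type*} [LinearOrder α] {a : α}
    {s : Finset α} (ha : a ∉ s) : s.filter (· ≤ a) = s.filter (· < a) :=
  Finset.filter_congr fun _ hx => ⟨fun h => h.lt_of_ne (by rintro rfl; exact ha hx), le_of_lt⟩

theorem Commute.sum_left_of_pair {R ι : Type*} [Semiring R] [DecidableEq ι] {s : Finset ι}
    {f : ι → R} {x : R} {a b : ι} (ha : a ∈ s) (hb : b ∈ s) (hab : a ≠ b)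
    (hpair : Commute (f a + f b) x) (hrest : ∀ i ∈ s, i ≠ a → i ≠ b → Commute (f i) x) :
    Commute (∑ i ∈ s, f i) x := by
  rw [← Finset.add_sum_erase _ _ ha,
    ← Finset.add_sum_erase _ _ (Finset.mem_erase.2 ⟨hab.symm, hb⟩), ← add_assoc]
  refine hpair.add_left (Commute.sum_left _ _ _ fun i hi => ?_)
  simp only [Finset.mem_erase] at hi
  exact hrest i hi.2.2 hi.2.1 hi.1

lemma opOf_phi (v : Finset ℕ → SP K) (E : Finset ℕ) : opOf v (phi K E) = v E := by
  simp [opOf, phi]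

lemma ext_phi {f g : SP K →ₗ[K] SP K} (h : ∀ E, f (phi K E) = g (phi K E)) : f = g := by
  refine Finsupp.lhom_ext fun E c => ?_
  have hc : (Finsupp.single E c : SP K) = c • phi K E := by simp [phi]
  rw [hc, map_smul, map_smul, h]

lemma mem_swapSet {j k : ℕ} {E : Finset ℕ} : k ∈ swapSet j E ↔ Equiv.swap j (j + 1) k ∈ E := by
  rw [swapSet, ← Equiv.coe_toEmbedding, ← Finset.map_eq_image, Finset.mem_map_equiv,
    Equiv.symm_swap, Equiv.coe_toEmbedding]

lemma swapSet_insert (j k : ℕ) (E : Finset ℕ) :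
    swapSet j (insert k E) = insert (Equiv.swap j (j + 1) k) (swapSet j E) :=
  Finset.image_insert _ _ _

lemma swapSet_erase (j k : ℕ) (E : Finset ℕ) :
    swapSet j (E.erase k) = (swapSet j E).erase (Equiv.swap j (j + 1) k) :=
  Finset.image_erase (Equiv.injective _) _ _

lemma swapSet_eq_self {j : ℕ} {E : Finset ℕ} (h : j ∈ E ↔ j + 1 ∈ E) : swapSet j E = E := by
  ext k
  rw [mem_swapSet]
  rcases eq_or_ne k j with rfl | hk
  · rw [Equiv.swap_apply_left]; exact h.symm
  rcases eq_or_ne k (j + 1) with rfl | hk'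
  · rw [Equiv.swap_apply_right]; exact h
  · rw [Equiv.swap_apply_of_ne_of_ne hk hk']

lemma card_filter_lt_swapSet {i j : ℕ} (hij : i ≠ j + 1) (E : Finset ℕ) :
    #((swapSet j E).filter (· < i)) = #(E.filter (· < i)) := by
  rw [swapSet, Finset.filter_image, Finset.card_image_of_injective _ (Equiv.injective _)]
  refine congrArg _ (Finset.filter_congr fun x _ => ?_)
  rcases eq_or_ne x j with rfl | hx
  · rw [Equiv.swap_apply_left]; omega
  rcases eq_or_ne x (j + 1) with rfl | hx'
  · rw [Equiv.swap_apply_right]; omega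
  · rw [Equiv.swap_apply_of_ne_of_ne hx hx']

section Outside

variable (t : K) {i j : ℕ} (hij : i ≠ j) (hij' : i ≠ j + 1)
include hij hij'

lemma commute_thetaHat_heckeT : Commute (thetaHat K i) (heckeT t j) := by
  have hswap : Equiv.swap j (j + 1) i = i := Equiv.swap_apply_of_ne_of_ne hij hij'
  refine ext_phi fun E => ?_
  by_cases hj : j ∈ E <;> by_cases hj' : j + 1 ∈ E <;> by_cases hi : i ∈ E <;>
    simp [heckeT, thetaHat, opOf_phi, hj, hj', hi, mem_swapSet, hswap, swapSet_insert,
      card_filter_lt_swapSet hij', hij.symm, hij'.symm, smul_smul, mul_comm]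

lemma commute_fermD_heckeT : Commute (fermD K i) (heckeT t j) := by
  have hswap : Equiv.swap j (j + 1) i = i := Equiv.swap_apply_of_ne_of_ne hij hij'
  refine ext_phi fun E => ?_
  by_cases hj : j ∈ E <;> by_cases hj' : j + 1 ∈ E <;> by_cases hi : i ∈ E <;>
    simp [heckeT, fermD, opOf_phi, hj, hj', hi, mem_swapSet, hswap, swapSet_erase,
      card_filter_lt_swapSet hij', hij.symm, hij'.symm, smul_smul, mul_comm]

end Outside

lemma swapSet_insert_left {j : ℕ} {F : Finset ℕ} (hj : j ∉ F) (hj' : j + 1 ∉ F) :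
    swapSet j (insert j F) = insert (j + 1) F := by
  rw [swapSet_insert, Equiv.swap_apply_left, swapSet_eq_self (by simp [hj, hj'])]

lemma swapSet_insert_right {j : ℕ} {F : Finset ℕ} (hj : j ∉ F) (hj' : j + 1 ∉ F) :
    swapSet j (insert (j + 1) F) = insert j F := by
  rw [swapSet_insert, Equiv.swap_apply_right, swapSet_eq_self (by simp [hj, hj'])]

lemma commute_thetaHat_add_heckeT (t : K) (j : ℕ) :
    Commute (thetaHat K j + thetaHat K (j + 1)) (heckeT t j) := by
  refine ext_phi (Finset.forall_of_forall_insert_pair j (j + 1) fun F hj hj' => ?_)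
  refine ⟨?_, ?_, ?_, ?_⟩ <;>
    simp [heckeT, thetaHat, opOf_phi, hj, hj', swapSet_insert_left hj hj',
      swapSet_insert_right hj hj', Finset.filter_le_eq_filter_lt_of_notMem hj,
      Finset.filter_insert, Finset.insert_comm, pow_succ] <;>
    module

lemma commute_fermD_add_heckeT (t : K) (j : ℕ) :
    Commute (fermD K j + t • fermD K (j + 1)) (heckeT t j) := by
  refine ext_phi (Finset.forall_of_forall_insert_pair j (j + 1) fun F hj hj' => ?_)
  refine ⟨?_, ?_, ?_, ?_⟩ <;>
    simp [heckeT, fermD, opOf_phi, hj, hj', swapSet_insert_left hj hj',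
      swapSet_insert_right hj hj', Finset.filter_le_eq_filter_lt_of_notMem hj,
      Finset.filter_insert, pow_succ, Finset.erase_insert_of_ne (show j ≠ j + 1 by omega),
      Finset.erase_insert hj'] <;>
    module

lemma commute_opM_heckeT (t : K) {N j : ℕ} (h1 : 1 ≤ j) (h2 : j < N) :
    Commute (opM K N) (heckeT t j) :=
  Commute.sum_left_of_pair (Finset.mem_Icc.2 ⟨h1, h2.le⟩) (Finset.mem_Icc.2 ⟨by omega, h2⟩)
    (by omega) (commute_thetaHat_add_heckeT t j)
    fun _ _ hi hi' => commute_thetaHat_heckeT t hi hi'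

lemma commute_opD_heckeT (t : K) {N j : ℕ} (h1 : 1 ≤ j) (h2 : j < N) :
    Commute (opD t N) (heckeT t j) := by
  refine Commute.sum_left_of_pair (Finset.mem_Icc.2 ⟨h1, h2.le⟩)
    (Finset.mem_Icc.2 ⟨by omega, h2⟩) (by omega) ?_
    fun _ _ hi hi' => (commute_fermD_heckeT t hi hi').smul_left _
  have hpair : t ^ (j - 1) • fermD K j + t ^ (j + 1 - 1) • fermD K (j + 1)
      = t ^ (j - 1) • (fermD K j + t • fermD K (j + 1)) := by
    rw [smul_add, smul_smul, ← pow_succ, Nat.sub_add_cancel h1, Nat.add_sub_cancel]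
  rw [hpair]
  exact (commute_fermD_add_heckeT t j).smul_left _

/-- M = Σ θ̂_i and D = Σ t^{i-1}∂_i commute with T_j for 1 ≤ j < N. -/
theorem opM_opD_comm_heckeT (K : Type) [Field K] (t : K) (N j : ℕ)
    (h1 : 1 ≤ j) (h2 : j < N) :
    opM K N ∘ₗ heckeT t j = heckeT t j ∘ₗ opM K N ∧
    opD t N ∘ₗ heckeT t j = heckeT t j ∘ₗ opD t N :=
  ⟨(commute_opM_heckeT t h1 h2).eq, (commute_opD_heckeT t h1 h2).eq⟩
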